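/- arXiv:2510.18978 — 2 statements merged into one kernel-verified Lean document; each statement's English description precedes it below -/
import Mathlib

section
/- Let f : ℝ^n → ℝ be differentiable at φ. If u is uniformly distributed on the unit sphere S^{n−1} ⊆ ℝ^n, then the two-point zero-order gradient estimate (n/(2ε))·(f(φ + εu) − f(φ − εu))·u converges in expectation to ∇f(φ) as ε → 0; that is, lim_{ε→0} E[(n/(2ε))(f(φ+εu) − f(φ−εu))u] = ∇f(φ). -/
/-! By rotation invariance, conjugating the second-moment matrix `E[u uᵀ]` by a coordinate sign flip
or permutation leaves it unchanged, so it is `n⁻¹ • 1` (its trace is `E ‖u‖² = 1`); hence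
`n • E[⟪∇f φ, u⟫ u] = ∇f φ`. The symmetric difference quotient tends to `⟪∇f φ, u⟫` pointwise and,
`f` being Lipschitz near `φ`, it is bounded, so dominated convergence passes the limit under the
expectation. -/

open MeasureTheory Filter Topology

theorem HasFDerivAt.tendsto_symmetric_slope {E F : Type*} [NormedAddCommGroup E] [NormedSpace ℝ E]
    [NormedAddCommGroup F] [NormedSpace ℝ F] {f : E → F} {f' : E →L[ℝ] F} {x : E}
    (hf : HasFDerivAt f f' x) (v : E) :
    Tendsto (fun t : ℝ => (2 * t)⁻¹ • (f (x + t • v) - f (x - t • v))) (𝓝[≠] 0) (𝓝 (f' v)) := by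
  have hplus : HasDerivAt (fun t : ℝ => f (x + t • v)) (f' v) 0 := by
    refine (by simpa using hf : HasFDerivAt f f' (x + (0 : ℝ) • v)).comp_hasDerivAt 0 ?_
    simpa using ((hasDerivAt_id (0 : ℝ)).smul_const v).const_add x
  have hminus : HasDerivAt (fun t : ℝ => f (x - t • v)) (-f' v) 0 := by
    rw [← map_neg]
    refine (by simpa using hf : HasFDerivAt f f' (x - (0 : ℝ) • v)).comp_hasDerivAt 0 ?_
    simpa using ((hasDerivAt_id (0 : ℝ)).smul_const v).const_sub x
  have hslope := ((hasDerivAt_iff_tendsto_slope.mp (hplus.sub hminus)).const_smul (2⁻¹ : ℝ))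
  rw [sub_neg_eq_add, ← two_smul ℝ, smul_smul, inv_mul_cancel₀ two_ne_zero, one_smul] at hslope
  refine hslope.congr' (eventually_nhdsWithin_of_forall fun t _ => ?_)
  simp [slope_def_module, smul_smul, mul_comm]

section UnitBall

variable {E F : Type*} [NormedAddCommGroup E] [MeasurableSpace E] [BorelSpace E]
  [NormedAddCommGroup F] {μ : Measure E}

theorem ContinuousOn.aestronglyMeasurable_of_ae_norm_le_one [SecondCountableTopologyEither E F]
    [TopologicalSpace.PseudoMetrizableSpace F] {g : E → F}
    (hg : ContinuousOn g (Metric.closedBall 0 1)) (hμ : ∀ᵐ u ∂μ, ‖u‖ ≤ 1) :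
    AEStronglyMeasurable g μ := by
  have hmem : ∀ᵐ u ∂μ, u ∈ Metric.closedBall (0 : E) 1 := hμ.mono fun u hu => by simpa using hu
  simpa [Measure.restrict_eq_self_of_ae_mem hmem] using
    hg.aestronglyMeasurable (μ := μ) Metric.isClosed_closedBall.measurableSet

theorem Continuous.integrable_of_ae_norm_le_one [ProperSpace E] [IsFiniteMeasure μ]
    {g : E → F} (hg : Continuous g) (hμ : ∀ᵐ u ∂μ, ‖u‖ ≤ 1) : Integrable g μ := by
  have hmem : ∀ᵐ u ∂μ, u ∈ Metric.closedBall (0 : E) 1 := hμ.mono fun u hu => by simpa using hu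
  rw [← Measure.restrict_eq_self_of_ae_mem hmem]
  exact hg.continuousOn.integrableOn_compact (isCompact_closedBall 0 1)

end UnitBall

section SymmetricSlope

variable {E : Type*} [NormedAddCommGroup E] [NormedSpace ℝ E]

theorem LipschitzOnWith.norm_symmetric_slope_smul_le {f : E → ℝ} {K : NNReal} {s : Set E}
    (hf : LipschitzOnWith K f s) {x u : E} {ε : ℝ} (hplus : x + ε • u ∈ s)
    (hminus : x - ε • u ∈ s) (hu : ‖u‖ ≤ 1) :
    ‖((2 * ε)⁻¹ * (f (x + ε • u) - f (x - ε • u))) • u‖ ≤ K := by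
  have hlip := hf.dist_le_mul _ hplus _ hminus
  rw [Real.dist_eq, dist_eq_norm, add_sub_sub_cancel, ← two_smul ℝ, smul_smul, norm_smul,
    Real.norm_eq_abs] at hlip
  rw [norm_smul, norm_mul, norm_inv, Real.norm_eq_abs, Real.norm_eq_abs]
  have hcancel : |2 * ε|⁻¹ * |2 * ε| ≤ 1 := inv_mul_le_one_of_le₀ le_rfl (abs_nonneg _)
  calc |2 * ε|⁻¹ * |f (x + ε • u) - f (x - ε • u)| * ‖u‖
      ≤ |2 * ε|⁻¹ * (K * (|2 * ε| * ‖u‖)) * 1 := by gcongr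
    _ = (|2 * ε|⁻¹ * |2 * ε|) * ‖u‖ * K := by ring
    _ ≤ 1 * 1 * K := by gcongr
    _ = K := by ring

theorem tendsto_integral_symmetric_slope_smul [MeasurableSpace E] [BorelSpace E]
    [SecondCountableTopology E] (μ : Measure E) [IsFiniteMeasure μ] (hμ : ∀ᵐ u ∂μ, ‖u‖ ≤ 1)
    {f : E → ℝ} {x : E} (hf : ContDiffAt ℝ 1 f x) :
    Tendsto (fun ε : ℝ => ∫ u, ((2 * ε)⁻¹ * (f (x + ε • u) - f (x - ε • u))) • u ∂μ)
      (𝓝[≠] 0) (𝓝 (∫ u, fderiv ℝ f x u • u ∂μ)) := by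
  obtain ⟨K, t, ht, hK⟩ := hf.exists_lipschitzOnWith
  obtain ⟨r, hr, hball⟩ := Metric.mem_nhds_iff.mp ht
  have hmaps : ∀ ε : ℝ, |ε| < r → ∀ u : E, ‖u‖ ≤ 1 →
      x + ε • u ∈ Metric.ball x r ∧ x - ε • u ∈ Metric.ball x r := by
    intro ε hε u hu
    have : ‖ε • u‖ < r := by
      rw [norm_smul, Real.norm_eq_abs]
      nlinarith [abs_nonneg ε, norm_nonneg u]
    constructor <;> simpa [dist_eq_norm] using this
  have hsmall : ∀ᶠ ε in 𝓝[≠] (0 : ℝ), |ε| < r :=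
    nhdsWithin_le_nhds (by simpa [Metric.ball, Real.dist_eq] using Metric.ball_mem_nhds (0 : ℝ) hr)
  refine tendsto_integral_filter_of_dominated_convergence (fun _ => (K : ℝ)) ?_ ?_
    (integrable_const _) (ae_of_all _ fun u =>
      ((hf.differentiableAt one_ne_zero).hasFDerivAt.tendsto_symmetric_slope u).smul_const u)
  · filter_upwards [hsmall] with ε hε
    refine ContinuousOn.aestronglyMeasurable_of_ae_norm_le_one ?_ hμ
    have hfc : ContinuousOn f (Metric.ball x r) := hK.continuousOn.mono hball
    refine (continuousOn_const.mul (ContinuousOn.sub ?_ ?_)).smul continuousOn_id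
    · exact hfc.comp (by fun_prop) fun u hu => (hmaps ε hε u (by simpa using hu)).1
    · exact hfc.comp (by fun_prop) fun u hu => (hmaps ε hε u (by simpa using hu)).2
  · filter_upwards [hsmall] with ε hε
    filter_upwards [hμ] with u hu
    obtain ⟨hplus, hminus⟩ := hmaps ε hε u hu
    exact hK.norm_symmetric_slope_smul_le (hball hplus) (hball hminus) hu

end SymmetricSlope

theorem integral_comp_linearIsometryEquiv_of_map_eq {E F : Type*} [NormedAddCommGroup E]
    [NormedSpace ℝ E] [MeasurableSpace E] [BorelSpace E] [NormedAddCommGroup F] [NormedSpace ℝ F]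
    {μ : Measure E} (R : E ≃ₗᵢ[ℝ] E) (hR : μ.map R = μ) (g : E → F) :
    ∫ u, g (R u) ∂μ = ∫ u, g u ∂μ := by
  conv_rhs => rw [← hR]
  exact (R.toHomeomorph.measurableEmbedding.integral_map g).symm

section SecondMoments

variable {ι : Type*} [Fintype ι] {μ : Measure (EuclideanSpace ℝ ι)}

theorem integral_coord_mul_coord_of_ne
    (hinv : ∀ R : EuclideanSpace ℝ ι ≃ₗᵢ[ℝ] EuclideanSpace ℝ ι, μ.map R = μ) {i j : ι}
    (hij : i ≠ j) : ∫ u, u i * u j ∂μ = 0 := by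
  classical
  let R : EuclideanSpace ℝ ι ≃ₗᵢ[ℝ] EuclideanSpace ℝ ι := LinearIsometryEquiv.piLpCongrRight 2
    fun k => if k = i then LinearIsometryEquiv.neg ℝ else LinearIsometryEquiv.refl ℝ ℝ
  have hflip : ∫ u, (R u) i * (R u) j ∂μ = -∫ u, u i * u j ∂μ := by
    rw [← integral_neg]
    congr 1 with u
    simp [R, LinearIsometryEquiv.piLpCongrRight_apply, hij.symm]
  have := integral_comp_linearIsometryEquiv_of_map_eq R (hinv R) (fun u => u i * u j)
  linarith

theorem integral_coord_sq_eq
    (hinv : ∀ R : EuclideanSpace ℝ ι ≃ₗᵢ[ℝ] EuclideanSpace ℝ ι, μ.map R = μ) (i j : ι) :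
    ∫ u, u i ^ 2 ∂μ = ∫ u, u j ^ 2 ∂μ := by
  classical
  rw [← integral_comp_linearIsometryEquiv_of_map_eq
    (LinearIsometryEquiv.piLpCongrLeft 2 ℝ ℝ (Equiv.swap i j)) (hinv _) (fun u => u j ^ 2)]
  congr 1 with u
  simp [Equiv.swap_apply_right]

theorem card_mul_integral_coord_sq [IsProbabilityMeasure μ] (hμ : ∀ᵐ u ∂μ, ‖u‖ = 1)
    (hinv : ∀ R : EuclideanSpace ℝ ι ≃ₗᵢ[ℝ] EuclideanSpace ℝ ι, μ.map R = μ) (i : ι) :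
    Fintype.card ι * ∫ u, u i ^ 2 ∂μ = 1 := by
  have htrace : ∑ k, ∫ u, u k ^ 2 ∂μ = 1 := by
    rw [← integral_finsetSum _ fun k _ => (by fun_prop : Continuous fun u : EuclideanSpace ℝ ι =>
      u k ^ 2).integrable_of_ae_norm_le_one (hμ.mono fun u hu => hu.le)]
    rw [integral_congr_ae (hμ.mono fun u hu => by simp [← EuclideanSpace.real_norm_sq_eq, hu] :
      (fun u : EuclideanSpace ℝ ι => ∑ k, u k ^ 2) =ᵐ[μ] fun _ => 1)]
    simp
  simpa [integral_coord_sq_eq hinv _ i] using htrace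

theorem card_smul_integral_inner_smul [IsProbabilityMeasure μ] (hμ : ∀ᵐ u ∂μ, ‖u‖ = 1)
    (hinv : ∀ R : EuclideanSpace ℝ ι ≃ₗᵢ[ℝ] EuclideanSpace ℝ ι, μ.map R = μ)
    (v : EuclideanSpace ℝ ι) :
    (Fintype.card ι : ℝ) • ∫ u, inner ℝ v u • u ∂μ = v := by
  classical
  have hball : ∀ᵐ u ∂μ, ‖u‖ ≤ 1 := hμ.mono fun u hu => hu.le
  have hint : Integrable (fun u : EuclideanSpace ℝ ι => inner ℝ v u • u) μ :=
    (by fun_prop : Continuous fun u : EuclideanSpace ℝ ι => inner ℝ v u • u)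
      |>.integrable_of_ae_norm_le_one hball
  ext i
  have hcoord : (∫ u, inner ℝ v u • u ∂μ) i = ∑ j, v j * ∫ u, u j * u i ∂μ := by
    calc (∫ u, inner ℝ v u • u ∂μ) i = EuclideanSpace.proj i (∫ u, inner ℝ v u • u ∂μ) := rfl
      _ = ∫ u, ∑ j, v j * (u j * u i) ∂μ := by
        rw [← (EuclideanSpace.proj i).integral_comp_comm hint]
        congr with u
        simp [PiLp.inner_apply, Finset.mul_sum, mul_comm, mul_left_comm]
      _ = ∑ j, v j * ∫ u, u j * u i ∂μ := by
        rw [integral_finsetSum _ fun j _ =>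
          ((by fun_prop : Continuous fun u : EuclideanSpace ℝ ι => u j * u i)
            |>.integrable_of_ae_norm_le_one hball).const_mul _]
        exact Finset.sum_congr rfl fun j _ => integral_const_mul _ _
  rw [PiLp.smul_apply, hcoord, Finset.sum_eq_single i
    (fun j _ hj => by rw [integral_coord_mul_coord_of_ne hinv hj, mul_zero]) (by simp),
    smul_eq_mul, mul_left_comm]
  simp_rw [← sq]
  rw [card_mul_integral_coord_sq hμ hinv i, mul_one]

end SecondMoments

/-- The two-point zero-order gradient estimate converges in expectation to the gradient. -/
theorem stmt_4 {n : ℕ} (μ : Measure (EuclideanSpace ℝ (Fin n)))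
    [IsProbabilityMeasure μ]
    (hsupp : μ (Metric.sphere (0 : EuclideanSpace ℝ (Fin n)) 1)ᶜ = 0)
    (hinv : ∀ R : EuclideanSpace ℝ (Fin n) ≃ₗᵢ[ℝ] EuclideanSpace ℝ (Fin n),
      μ.map R = μ)
    (f : EuclideanSpace ℝ (Fin n) → ℝ) (φ : EuclideanSpace ℝ (Fin n))
    (hf : ∃ U : Set (EuclideanSpace ℝ (Fin n)), IsOpen U ∧ φ ∈ U ∧ ContDiffOn ℝ 1 f U) :
    Tendsto
      (fun ε : ℝ =>
        ∫ u, (((n : ℝ) / (2 * ε)) * (f (φ + ε • u) - f (φ - ε • u))) • u ∂μ)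
      (nhdsWithin 0 (Set.Ioi 0)) (nhds (gradient f φ)) := by
  obtain ⟨U, hU, hφU, hfU⟩ := hf
  have hsphere : ∀ᵐ u ∂μ, ‖u‖ = 1 := by
    filter_upwards [mem_ae_iff.mpr hsupp] with u hu using mem_sphere_zero_iff_norm.mp hu
  have hlim := ((tendsto_integral_symmetric_slope_smul μ (hsphere.mono fun u hu => hu.le)
    (hfU.contDiffAt (hU.mem_nhds hφU))).mono_left
      (nhdsWithin_mono _ fun ε hε => ne_of_gt hε)).const_smul (n : ℝ)
  have hgrad : (n : ℝ) • ∫ u, fderiv ℝ f φ u • u ∂μ = gradient f φ := by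
    simpa [gradient, InnerProductSpace.toDual_symm_apply] using
      card_smul_integral_inner_smul hsphere hinv (gradient f φ)
  rw [hgrad] at hlim
  refine hlim.congr fun ε => ?_
  rw [← integral_smul]
  congr with u
  rw [smul_smul, div_eq_mul_inv, mul_assoc]
end

section
/- For a linear function f(x) = ⟨g, x⟩ + c on ℝ^n, the zero-order estimator (n/(2ε))(f(φ + εu) − f(φ − εu))u with u uniform on the unit sphere is an unbiased estimator of the gradient: its expectation equals g for every ε > 0 and every φ. -/
/-!
For affine `f` the estimator equals `n ⟪g, u⟫ u`, so everything reduces to the second moments of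
a rotation-invariant probability measure on the unit sphere: flipping the sign of one coordinate
shows `E[u i u j] = 0` for `i ≠ j`, swapping two coordinates shows that all `E[u i ^ 2]` agree,
and they sum to `E ‖u‖² = 1`, so each equals `1 / n`.
-/

open MeasureTheory Real
open scoped RealInnerProductSpace

namespace EuclideanSpace

variable {ι : Type*} [Fintype ι] {μ : Measure (EuclideanSpace ℝ ι)}

theorem integrable_apply_mul_apply [IsFiniteMeasure μ] (hμ : ∀ᵐ u ∂μ, ‖u‖ = 1) (i j : ι) :
    Integrable (fun u : EuclideanSpace ℝ ι => u i * u j) μ := by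
  refine .of_bound (by fun_prop) 1 ?_
  filter_upwards [hμ] with u hu
  rw [norm_mul, ← one_mul (1 : ℝ)]
  exact mul_le_mul (hu ▸ PiLp.norm_apply_le u i) (hu ▸ PiLp.norm_apply_le u j)
    (norm_nonneg _) zero_le_one

theorem integrable_inner_smul_self [IsFiniteMeasure μ] (hμ : ∀ᵐ u ∂μ, ‖u‖ = 1)
    (g : EuclideanSpace ℝ ι) :
    Integrable (fun u : EuclideanSpace ℝ ι => ⟪g, u⟫ • u) μ := by
  refine .of_bound (by fun_prop) ‖g‖ ?_
  filter_upwards [hμ] with u hu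
  simpa [norm_smul, hu] using abs_real_inner_le_norm g u

theorem integral_comp_linearIsometryEquiv
    (hinv : ∀ R : EuclideanSpace ℝ ι ≃ₗᵢ[ℝ] EuclideanSpace ℝ ι, μ.map R = μ)
    (R : EuclideanSpace ℝ ι ≃ₗᵢ[ℝ] EuclideanSpace ℝ ι) (h : EuclideanSpace ℝ ι → ℝ) :
    ∫ u, h (R u) ∂μ = ∫ u, h u ∂μ := by
  conv_rhs => rw [← hinv R]
  exact (integral_map_equiv R.toHomeomorph.toMeasurableEquiv h).symm

variable [DecidableEq ι]

theorem integral_apply_mul_apply_of_ne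
    (hinv : ∀ R : EuclideanSpace ℝ ι ≃ₗᵢ[ℝ] EuclideanSpace ℝ ι, μ.map R = μ)
    {i j : ι} (hij : i ≠ j) : ∫ u, u i * u j ∂μ = 0 := by
  let R : EuclideanSpace ℝ ι ≃ₗᵢ[ℝ] EuclideanSpace ℝ ι := LinearIsometryEquiv.piLpCongrRight 2
    fun k => if k = i then LinearIsometryEquiv.neg ℝ else .refl ℝ ℝ
  have hR : ∀ u : EuclideanSpace ℝ ι, R u i * R u j = -(u i * u j) := fun u => by
    simp [R, LinearIsometryEquiv.piLpCongrRight_apply, hij.symm]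
  have := integral_comp_linearIsometryEquiv hinv R fun u => u i * u j
  simp only [hR, integral_neg] at this
  linarith

theorem integral_apply_mul_self_eq
    (hinv : ∀ R : EuclideanSpace ℝ ι ≃ₗᵢ[ℝ] EuclideanSpace ℝ ι, μ.map R = μ)
    (i j : ι) : ∫ u, u i * u i ∂μ = ∫ u, u j * u j ∂μ := by
  let R : EuclideanSpace ℝ ι ≃ₗᵢ[ℝ] EuclideanSpace ℝ ι :=
    LinearIsometryEquiv.piLpCongrLeft 2 ℝ ℝ (Equiv.swap i j)
  have hR : ∀ u : EuclideanSpace ℝ ι, R u i = u j := fun u => by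
    simp [R, LinearIsometryEquiv.piLpCongrLeft_apply, Equiv.piCongrLeft'_apply]
  simpa [hR] using (integral_comp_linearIsometryEquiv hinv R fun u => u i * u i).symm

theorem integral_apply_mul_self [IsProbabilityMeasure μ] (hμ : ∀ᵐ u ∂μ, ‖u‖ = 1)
    (hinv : ∀ R : EuclideanSpace ℝ ι ≃ₗᵢ[ℝ] EuclideanSpace ℝ ι, μ.map R = μ)
    (i : ι) : ∫ u, u i * u i ∂μ = (Fintype.card ι : ℝ)⁻¹ := by
  have hsum : ∑ j, ∫ u, u j * u j ∂μ = 1 := by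
    rw [← integral_finsetSum _ fun j _ => integrable_apply_mul_apply hμ j j]
    calc ∫ u, ∑ j, u j * u j ∂μ = ∫ _, (1 : ℝ) ∂μ := by
          refine integral_congr_ae ?_
          filter_upwards [hμ] with u hu
          simp [← sq, ← real_norm_sq_eq, hu]
      _ = 1 := by simp
  simp only [integral_apply_mul_self_eq hinv _ i, Finset.sum_const, Finset.card_univ,
    nsmul_eq_mul] at hsum
  exact eq_inv_of_mul_eq_one_right hsum

theorem integral_inner_mul_apply [IsProbabilityMeasure μ] (hμ : ∀ᵐ u ∂μ, ‖u‖ = 1)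
    (hinv : ∀ R : EuclideanSpace ℝ ι ≃ₗᵢ[ℝ] EuclideanSpace ℝ ι, μ.map R = μ)
    (g : EuclideanSpace ℝ ι) (i : ι) :
    ∫ u, ⟪g, u⟫ * u i ∂μ = g i * (Fintype.card ι : ℝ)⁻¹ := by
  have hexpand : ∀ u : EuclideanSpace ℝ ι, ⟪g, u⟫ * u i = ∑ j, g j * (u j * u i) := fun u => by
    simp only [PiLp.inner_apply, RCLike.inner_apply, conj_trivial, Finset.sum_mul]
    exact Finset.sum_congr rfl fun j _ => by ring
  simp only [hexpand]
  rw [integral_finsetSum _ fun j _ => (integrable_apply_mul_apply hμ j i).const_mul _]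
  simp only [integral_const_mul]
  rw [Finset.sum_eq_single i (fun j _ hji => by rw [integral_apply_mul_apply_of_ne hinv hji,
    mul_zero]) (by simp), integral_apply_mul_self hμ hinv]

theorem card_smul_integral_inner_smul_self [IsProbabilityMeasure μ] (hμ : ∀ᵐ u ∂μ, ‖u‖ = 1)
    (hinv : ∀ R : EuclideanSpace ℝ ι ≃ₗᵢ[ℝ] EuclideanSpace ℝ ι, μ.map R = μ)
    (g : EuclideanSpace ℝ ι) :
    (Fintype.card ι : ℝ) • ∫ u, ⟪g, u⟫ • u ∂μ = g := by
  ext i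
  have hcard : (Fintype.card ι : ℝ) ≠ 0 := by have : Nonempty ι := ⟨i⟩; positivity
  have happly : (∫ u, ⟪g, u⟫ • u ∂μ) i = ∫ u, ⟪g, u⟫ * u i ∂μ := by
    simpa using ((proj i).integral_comp_comm (integrable_inner_smul_self hμ g)).symm
  rw [PiLp.smul_apply, happly, integral_inner_mul_apply hμ hinv, smul_eq_mul]
  field_simp

end EuclideanSpace

/-- For affine `f`, the two-point zero-order estimator is unbiased for the gradient. -/
theorem stmt_6 {n : ℕ} (μ : Measure (EuclideanSpace ℝ (Fin n)))
    [IsProbabilityMeasure μ]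
    (hsupp : μ (Metric.sphere (0 : EuclideanSpace ℝ (Fin n)) 1)ᶜ = 0)
    (hinv : ∀ R : EuclideanSpace ℝ (Fin n) ≃ₗᵢ[ℝ] EuclideanSpace ℝ (Fin n),
      μ.map R = μ)
    (g : EuclideanSpace ℝ (Fin n)) (c : ℝ)
    (f : EuclideanSpace ℝ (Fin n) → ℝ) (hf : ∀ x, f x = ⟪g, x⟫ + c)
    (ε : ℝ) (hε : 0 < ε) (φ : EuclideanSpace ℝ (Fin n)) :
    (∫ u, (((n : ℝ) / (2 * ε)) * (f (φ + ε • u) - f (φ - ε • u))) • u ∂μ) = g := by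
  have hμ : ∀ᵐ u ∂μ, ‖u‖ = 1 := by
    filter_upwards [ae_iff.2 hsupp] with u hu
    simpa using hu
  have hestimator : ∀ u : EuclideanSpace ℝ (Fin n),
      ((n : ℝ) / (2 * ε)) * (f (φ + ε • u) - f (φ - ε • u)) = n * ⟪g, u⟫ := fun u => by
    rw [hf, hf, inner_add_right, inner_sub_right, real_inner_smul_right]
    field_simp
    ring
  simp only [hestimator, mul_smul, integral_smul]
  simpa using EuclideanSpace.card_smul_integral_inner_smul_self hμ hinv g
end
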